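/- Let z_1,…,z_n ∈ ℝ^{2m}, Z = [z_1 … z_n] ∈ ℝ^{2m×n}, V = [[I_m, −I_m],[−I_m, O_m]] ∈ ℝ^{2m×2m}, and V̄ = Zᵀ V Z. Then the infimum of tr(Ξ_π V̄) over all k ∈ ℕ and all signaling rules π with k signals equals the infimum of tr(Ξ V̄) over all completely positive matrices Ξ ∈ ℝ^{n×n} satisfying Ξ 𝟙 = p_o. -/

import Mathlib

/-!
Both constraint sets describe the same set of matrices, so the infima agree whatever the
objective. A signaling rule gives `Ξ_π = B Bᵀ` with nonnegative columns `b_s = √p(s) · p_s`,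
and `Ξ_π 𝟙 = p_o` because the posteriors average to the prior. Conversely, a nonnegative
factor `Ξ = B Bᵀ` with `Ξ 𝟙 = p_o` is realised by one signal per column `b_s`: with
`t_s = 𝟙ᵀ b_s`, the rule `π(s|z_j) = b_s(j) t_s / p_o(j)` has `p(s) = t_s²` and
posterior `b_s / t_s`.
-/

open Matrix BigOperators

/-- A real `n × n` matrix is completely positive if it factors as `B * Bᵀ`
for some entrywise-nonnegative `n × k` matrix `B`. -/
def IsCompletelyPositive {n : ℕ} (Ξ : Matrix (Fin n) (Fin n) ℝ) : Prop :=
  ∃ (k : ℕ) (B : Matrix (Fin n) (Fin k) ℝ), (∀ i j, 0 ≤ B i j) ∧ Ξ = B * Bᵀ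

/-- Probability that signal `s` is sent: `p(s) = ∑ j, π(s|z_j) p_o(j)`. -/
noncomputable def sigProb {n k : ℕ} (π : Fin k → Fin n → ℝ) (p_o : Fin n → ℝ) (s : Fin k) : ℝ :=
  ∑ j, π s j * p_o j

/-- Posterior probability of state `j` given signal `s`. -/
noncomputable def posterior {n k : ℕ} (π : Fin k → Fin n → ℝ) (p_o : Fin n → ℝ)
    (s : Fin k) (j : Fin n) : ℝ :=
  π s j * p_o j / sigProb π p_o s

/-- Posterior-correlation matrix `Ξ_π[i,j] = ∑_{s : p(s) > 0} p(s) p_s(i) p_s(j)`. -/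
noncomputable def XiPi {n k : ℕ} (π : Fin k → Fin n → ℝ) (p_o : Fin n → ℝ) :
    Matrix (Fin n) (Fin n) ℝ :=
  Matrix.of fun i j => ∑ s : Fin k,
    if 0 < sigProb π p_o s then
      sigProb π p_o s * posterior π p_o s i * posterior π p_o s j
    else 0

variable {n k : ℕ}

lemma sigProb_nonneg {π : Fin k → Fin n → ℝ} {p_o : Fin n → ℝ}
    (hπ : ∀ s j, 0 ≤ π s j) (hp : ∀ j, 0 ≤ p_o j) (s : Fin k) : 0 ≤ sigProb π p_o s :=
  Finset.sum_nonneg fun j _ => mul_nonneg (hπ s j) (hp j)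

lemma posterior_nonneg {π : Fin k → Fin n → ℝ} {p_o : Fin n → ℝ}
    (hπ : ∀ s j, 0 ≤ π s j) (hp : ∀ j, 0 ≤ p_o j) (s : Fin k) (j : Fin n) :
    0 ≤ posterior π p_o s j :=
  div_nonneg (mul_nonneg (hπ s j) (hp j)) (sigProb_nonneg hπ hp s)

lemma sum_posterior {π : Fin k → Fin n → ℝ} {p_o : Fin n → ℝ} {s : Fin k}
    (hs : sigProb π p_o s ≠ 0) : ∑ j, posterior π p_o s j = 1 := by
  simp only [posterior, ← Finset.sum_div]
  exact div_self hs

lemma isCompletelyPositive_XiPi {π : Fin k → Fin n → ℝ} {p_o : Fin n → ℝ}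
    (hπ : ∀ s j, 0 ≤ π s j) (hp : ∀ j, 0 ≤ p_o j) :
    IsCompletelyPositive (XiPi π p_o) := by
  refine ⟨k, Matrix.of fun i s =>
    if 0 < sigProb π p_o s then √(sigProb π p_o s) * posterior π p_o s i else 0, ?_, ?_⟩
  · intro i s
    simp only [Matrix.of_apply]
    split_ifs
    exacts [mul_nonneg (Real.sqrt_nonneg _) (posterior_nonneg hπ hp s i), le_rfl]
  · ext i j
    simp only [XiPi, Matrix.of_apply, Matrix.mul_apply, Matrix.transpose_apply]
    refine Finset.sum_congr rfl fun s _ => ?_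
    split_ifs with h
    · rw [mul_mul_mul_comm, Real.mul_self_sqrt h.le]
      ring
    · simp

/-- For a null signal both sides vanish, since `p(s) = 0` forces every joint probability
`π(s|z_i) p_o(i)` to be zero. -/
lemma sum_XiPi_summand {π : Fin k → Fin n → ℝ} {p_o : Fin n → ℝ}
    (hπ : ∀ s j, 0 ≤ π s j) (hp : ∀ j, 0 ≤ p_o j) (s : Fin k) (i : Fin n) :
    (∑ j, if 0 < sigProb π p_o s then
        sigProb π p_o s * posterior π p_o s i * posterior π p_o s j else 0) =
      π s i * p_o i := by
  split_ifs with h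
  · rw [← Finset.mul_sum, sum_posterior h.ne', mul_one, posterior]
    field_simp
  · have h0 : sigProb π p_o s = 0 := le_antisymm (not_lt.mp h) (sigProb_nonneg hπ hp s)
    rw [Finset.sum_const_zero, eq_comm]
    exact (Finset.sum_eq_zero_iff_of_nonneg fun j _ => mul_nonneg (hπ s j) (hp j)).mp h0 i
      (Finset.mem_univ i)

lemma XiPi_mulVec_one {π : Fin k → Fin n → ℝ} {p_o : Fin n → ℝ}
    (hπ : ∀ s j, 0 ≤ π s j) (hπ1 : ∀ j, ∑ s, π s j = 1) (hp : ∀ j, 0 ≤ p_o j) :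
    XiPi π p_o *ᵥ (fun _ => 1) = p_o := by
  funext i
  simp only [mulVec, dotProduct, XiPi, Matrix.of_apply, mul_one]
  rw [Finset.sum_comm, Finset.sum_congr rfl fun s _ => sum_XiPi_summand hπ hp s i,
    ← Finset.sum_mul, hπ1 i, one_mul]

noncomputable def signalingOfFactor (B : Matrix (Fin n) (Fin k) ℝ) (p_o : Fin n → ℝ) :
    Fin k → Fin n → ℝ :=
  fun s j => B j s * (∑ i, B i s) / p_o j

section signalingOfFactor

variable {B : Matrix (Fin n) (Fin k) ℝ} {p_o : Fin n → ℝ}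

lemma signalingOfFactor_nonneg (hB : ∀ i s, 0 ≤ B i s) (hp : ∀ j, 0 ≤ p_o j) (s : Fin k)
    (j : Fin n) : 0 ≤ signalingOfFactor B p_o s j :=
  div_nonneg (mul_nonneg (hB j s) (Finset.sum_nonneg fun i _ => hB i s)) (hp j)

lemma sum_signalingOfFactor (hp : ∀ j, 0 < p_o j) (hBp : (B * Bᵀ) *ᵥ (fun _ => 1) = p_o)
    (j : Fin n) : ∑ s, signalingOfFactor B p_o s j = 1 := by
  have hrow : ∑ s, B j s * ∑ i, B i s = p_o j := by
    simp_rw [← hBp, mulVec, dotProduct, mul_one, Matrix.mul_apply, Matrix.transpose_apply,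
      Finset.mul_sum]
    exact Finset.sum_comm
  simp only [signalingOfFactor, ← Finset.sum_div, hrow]
  exact div_self (hp j).ne'

lemma signalingOfFactor_mul_prior (hp : ∀ j, 0 < p_o j) (s : Fin k) (j : Fin n) :
    signalingOfFactor B p_o s j * p_o j = B j s * ∑ i, B i s :=
  div_mul_cancel₀ _ (hp j).ne'

lemma sigProb_signalingOfFactor (hp : ∀ j, 0 < p_o j) (s : Fin k) :
    sigProb (signalingOfFactor B p_o) p_o s = (∑ i, B i s) ^ 2 := by
  simp only [sigProb, signalingOfFactor_mul_prior hp, ← Finset.sum_mul, sq]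

lemma XiPi_signalingOfFactor (hB : ∀ i s, 0 ≤ B i s) (hp : ∀ j, 0 < p_o j) :
    XiPi (signalingOfFactor B p_o) p_o = B * Bᵀ := by
  ext i j
  simp only [XiPi, Matrix.of_apply, Matrix.mul_apply, Matrix.transpose_apply]
  refine Finset.sum_congr rfl fun s _ => ?_
  rw [sigProb_signalingOfFactor hp]
  split_ifs with h
  · have ht : ∑ l, B l s ≠ 0 := fun h0 => by simp [h0] at h
    simp only [posterior, signalingOfFactor_mul_prior hp, sigProb_signalingOfFactor hp]
    field_simp
  · have ht : ∑ l, B l s = 0 := by simpa [sq_pos_iff] using h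
    rw [(Finset.sum_eq_zero_iff_of_nonneg fun l _ => hB l s).mp ht i (Finset.mem_univ i),
      zero_mul]

end signalingOfFactor

theorem exists_signaling_XiPi_eq_iff {p_o : Fin n → ℝ} (hp : ∀ j, 0 < p_o j)
    (Ξ : Matrix (Fin n) (Fin n) ℝ) :
    (∃ (k : ℕ) (π : Fin k → Fin n → ℝ),
        (∀ s j, 0 ≤ π s j) ∧ (∀ j, ∑ s, π s j = 1) ∧ XiPi π p_o = Ξ) ↔
      IsCompletelyPositive Ξ ∧ Ξ *ᵥ (fun _ => 1) = p_o := by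
  constructor
  · rintro ⟨k, π, hπ, hπ1, rfl⟩
    exact ⟨isCompletelyPositive_XiPi hπ fun j => (hp j).le,
      XiPi_mulVec_one hπ hπ1 fun j => (hp j).le⟩
  · rintro ⟨⟨k, B, hB, rfl⟩, hBp⟩
    exact ⟨k, signalingOfFactor B p_o, signalingOfFactor_nonneg hB fun j => (hp j).le,
      sum_signalingOfFactor hp hBp, XiPi_signalingOfFactor hB hp⟩

theorem sInf_signaling_eq_sInf_cp_general {m n : ℕ}
    (p_o : Fin n → ℝ) (hpos : ∀ j, 0 < p_o j)
    (Z : Matrix (Fin m ⊕ Fin m) (Fin n) ℝ) :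
    let V : Matrix (Fin m ⊕ Fin m) (Fin m ⊕ Fin m) ℝ := Matrix.fromBlocks 1 (-1) (-1) 0
    let Vbar : Matrix (Fin n) (Fin n) ℝ := Zᵀ * V * Z
    sInf {c : ℝ | ∃ (k : ℕ) (π : Fin k → Fin n → ℝ),
        (∀ s j, 0 ≤ π s j) ∧ (∀ j, ∑ s, π s j = 1) ∧
        c = Matrix.trace (XiPi π p_o * Vbar)} =
      sInf {c : ℝ | ∃ Ξ : Matrix (Fin n) (Fin n) ℝ,
        IsCompletelyPositive Ξ ∧ Ξ.mulVec (fun _ => (1 : ℝ)) = p_o ∧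
        c = Matrix.trace (Ξ * Vbar)} := by
  intro V Vbar
  congr 1
  ext c
  constructor
  · rintro ⟨k, π, hπ, hπ1, rfl⟩
    obtain ⟨hcp, hrow⟩ := (exists_signaling_XiPi_eq_iff hpos _).mp ⟨k, π, hπ, hπ1, rfl⟩
    exact ⟨XiPi π p_o, hcp, hrow, rfl⟩
  · rintro ⟨Ξ, hΞ, hΞp, rfl⟩
    obtain ⟨k, π, hπ, hπ1, rfl⟩ := (exists_signaling_XiPi_eq_iff hpos Ξ).mpr ⟨hΞ, hΞp⟩
    exact ⟨k, π, hπ, hπ1, rfl⟩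

/-- With `Z = [z_1 … z_n] ∈ ℝ^{2m×n}`, `V = [[I, −I], [−I, O]]` and `V̄ = Zᵀ V Z`, the
infimum of `tr(Ξ_π V̄)` over all `k` and all signaling rules `π` with `k` signals equals
the infimum of `tr(Ξ V̄)` over all completely positive `Ξ` with `Ξ 𝟙 = p_o`. -/
theorem sInf_signaling_eq_sInf_cp {m n : ℕ}
    (p_o : Fin n → ℝ) (hpos : ∀ j, 0 < p_o j) (hsum : ∑ j, p_o j = 1)
    (Z : Matrix (Fin m ⊕ Fin m) (Fin n) ℝ) :
    let V : Matrix (Fin m ⊕ Fin m) (Fin m ⊕ Fin m) ℝ := Matrix.fromBlocks 1 (-1) (-1) 0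
    let Vbar : Matrix (Fin n) (Fin n) ℝ := Zᵀ * V * Z
    sInf {c : ℝ | ∃ (k : ℕ) (π : Fin k → Fin n → ℝ),
        (∀ s j, 0 ≤ π s j) ∧ (∀ j, ∑ s, π s j = 1) ∧
        c = Matrix.trace (XiPi π p_o * Vbar)} =
      sInf {c : ℝ | ∃ Ξ : Matrix (Fin n) (Fin n) ℝ,
        IsCompletelyPositive Ξ ∧ Ξ.mulVec (fun _ => (1 : ℝ)) = p_o ∧
        c = Matrix.trace (Ξ * Vbar)} :=
  sInf_signaling_eq_sInf_cp_general p_o hpos Z
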